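/- Let n, f be natural numbers and γ a rational with 1/2 < γ ≤ 1, and suppose n > 4f/(2γ-1). If at least γ·n of n replicas (of which at most f are Byzantine) received transaction tx before tx', then among any n - f replica orderings at most n(1-γ) + f orderings can report tx' before tx; in particular this count is strictly less than the threshold τ = n(1-γ) + f + 1. -/
import Mathlib


/-- Directional safety counting: if γ·n of n replicas (at most f Byzantine) received tx
before tx', then among any n - f replica orderings at most n(1-γ)+f report tx' before tx,
which is strictly less than the threshold τ = n(1-γ)+f+1. -/
theorem stmt1 {I : Type*} [Fintype I] [DecidableEq I]
    (n f : ℕ) (γ : ℚ) (hγ1 : 1/2 < γ) (hγ2 : γ ≤ 1)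
    (hn : (n : ℚ) > 4 * f / (2 * γ - 1))
    (hcard : Fintype.card I = n)
    (B : Finset I) (hB : B.card ≤ f)
    (R Rep : I → Prop) [DecidablePred R] [DecidablePred Rep]
    (hcorrect : ∀ i, i ∉ B → (Rep i ↔ ¬ R i))
    (hrecv : γ * n ≤ ((Finset.univ.filter R).card : ℚ))
    (S : Finset I) (hS : S.card = n - f) :
    (((S.filter Rep).card : ℚ) ≤ n * (1 - γ) + f) ∧
      ((n : ℚ) * (1 - γ) + f < n * (1 - γ) + f + 1) := by
  constructor
  · have hsub : S.filter Rep ⊆ B ∪ Finset.univ.filter (fun i => ¬ R i) := by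
      intro i hi
      simp only [Finset.mem_filter, Finset.mem_union, Finset.mem_univ, true_and] at *
      by_cases hiB : i ∈ B
      · exact Or.inl hiB
      · exact Or.inr ((hcorrect i hiB).mp hi.2)
    have h1 : (S.filter Rep).card ≤ B.card + (Finset.univ.filter (fun i => ¬ R i)).card :=
      le_trans (Finset.card_le_card hsub) (Finset.card_union_le _ _)
    have h2 : (Finset.univ.filter R).card + (Finset.univ.filter (fun i => ¬ R i)).card = n := by
      rw [Finset.card_filter_add_card_filter_not]
      simpa using hcard
    have hB' : (B.card : ℚ) ≤ f := by exact_mod_cast hB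
    have h2' : ((Finset.univ.filter R).card : ℚ) + ((Finset.univ.filter (fun i => ¬ R i)).card : ℚ) = n := by exact_mod_cast h2
    have h1' : ((S.filter Rep).card : ℚ) ≤ (B.card : ℚ) + ((Finset.univ.filter (fun i => ¬ R i)).card : ℚ) := by exact_mod_cast h1
    nlinarith
  · linarith
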